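/- arXiv:2009.06300 — 3 statements merged into one kernel-verified Lean document; each statement's English description precedes it below -/
import Mathlib

section
/- Let θ be an inner function on the unit disc D, α a unimodular complex number, and σ_α its Clark measure, i.e., the positive Borel measure on the unit circle T whose Poisson integral equals (1 − |θ(z)|²)/|α − θ(z)|² on D. Then σ_α is singular with respect to normalized Lebesgue measure on T. -/
/-!
Testing the Clark measure against the Poisson kernel at `(1 - r) ζ`, which is at least `1 / (4 r)`
on the arc of radius `r` around `ζ`, gives
`σ (B(ζ, r)) / m (B(ζ, r)) ≤ 8 π (1 - |θ|²) / |α - θ|²` evaluated at `(1 - r) ζ`. At almost every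
`ζ` the radial limit of `θ` is unimodular and different from `α`, so the right side tends to `0`
as `r → 0`; by the Besicovitch differentiation theorem the density of `σ` with respect to `m`
vanishes `m`-a.e., that is, `σ ⟂ m`.

That the radial limit differs from `α` almost everywhere comes from the mean value property of the
bounded holomorphic functions `(1 - s) / (1 - s ᾱ θ)`: passing to the boundary by dominated
convergence and then letting `s → 1`, the set where the radial limit equals `α` has measure
`lim (1 - s) / (1 - s ᾱ θ(0)) = 0`.
-/
open Complex Metric MeasureTheory Filter Set
open scoped ENNReal Topology Real ComplexConjugate

theorem MeasureTheory.Measure.mutuallySingular_of_tendsto_div_closedBall {β : Type*}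
    [MetricSpace β] [MeasurableSpace β] [BorelSpace β] [SecondCountableTopology β]
    [HasBesicovitchCovering β] {μ ν : Measure β} [IsLocallyFiniteMeasure μ]
    [IsLocallyFiniteMeasure ν]
    (h : ∀ᵐ x ∂ν, Tendsto (fun r => μ (closedBall x r) / ν (closedBall x r)) (𝓝[>] 0) (𝓝 0)) :
    μ ⟂ₘ ν := by
  refine (Measure.rnDeriv_eq_zero μ ν).1 ?_
  filter_upwards [Besicovitch.ae_tendsto_rnDeriv μ ν, h] with x h₁ h₂
  exact tendsto_nhds_unique h₁ h₂

noncomputable def circleMeasure : Measure ℂ :=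
  (ENNReal.ofReal (2 * π))⁻¹ •
    Measure.map (fun t : ℝ => exp (t * I)) (volume.restrict (Ioc 0 (2 * π)))

lemma measurable_exp_ofReal_mul_I : Measurable fun t : ℝ => exp (t * I) := by fun_prop

lemma circleMeasure_apply {s : Set ℂ} (hs : MeasurableSet s) :
    circleMeasure s = (ENNReal.ofReal (2 * π))⁻¹ *
      volume (Ioc 0 (2 * π) ∩ (fun t : ℝ => exp (t * I)) ⁻¹' s) := by
  rw [circleMeasure, Measure.smul_apply, Measure.map_apply measurable_exp_ofReal_mul_I hs,
    Measure.restrict_apply' measurableSet_Ioc, inter_comm, smul_eq_mul]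

instance : IsProbabilityMeasure circleMeasure := by
  constructor
  rw [circleMeasure_apply MeasurableSet.univ, preimage_univ, inter_univ, Real.volume_Ioc, sub_zero,
    ENNReal.inv_mul_cancel (by simp [Real.pi_pos]) ENNReal.ofReal_ne_top]

lemma ae_circleMeasure_norm_eq_one : ∀ᵐ ζ ∂circleMeasure, ‖ζ‖ = 1 := by
  rw [circleMeasure,
    Measure.ae_ennreal_smul_measure_iff (ENNReal.inv_ne_zero.2 ENNReal.ofReal_ne_top),
    ae_map_iff measurable_exp_ofReal_mul_I.aemeasurable
      (measurableSet_eq_fun (by fun_prop) (by fun_prop))]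
  exact Eventually.of_forall fun t => norm_exp_ofReal_mul_I t

lemma aestronglyMeasurable_circleMeasure {E : Type*} [NormedAddCommGroup E] {f : ℂ → E}
    (hf : ContinuousOn f (sphere 0 1)) : AEStronglyMeasurable f circleMeasure := by
  have h := hf.aestronglyMeasurable (μ := circleMeasure) isClosed_sphere.measurableSet
  rwa [Measure.restrict_eq_self_of_ae_mem] at h
  filter_upwards [ae_circleMeasure_norm_eq_one] with ζ hζ
  simpa using hζ

lemma integral_circleMeasure {E : Type*} [NormedAddCommGroup E] [NormedSpace ℝ E] {f : ℂ → E}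
    (hf : AEStronglyMeasurable f circleMeasure) :
    ∫ ζ, f ζ ∂circleMeasure = Real.circleAverage f 0 1 := by
  have hf' : AEStronglyMeasurable f
      (Measure.map (fun t : ℝ => exp (t * I)) (volume.restrict (Ioc 0 (2 * π)))) :=
    hf.mono_ac (Measure.absolutelyContinuous_smul (ENNReal.inv_ne_zero.2 ENNReal.ofReal_ne_top))
  rw [circleMeasure, integral_smul_measure,
    integral_map measurable_exp_ofReal_mul_I.aemeasurable hf',
    Real.circleAverage_def, intervalIntegral.integral_of_le Real.two_pi_pos.le,
    ENNReal.toReal_inv, ENNReal.toReal_ofReal Real.two_pi_pos.le]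
  simp [circleMap_zero]

lemma DifferentiableOn.integral_circleMeasure_comp_ofReal_mul {E : Type*} [NormedAddCommGroup E]
    [NormedSpace ℂ E] [CompleteSpace E] {h : ℂ → E} (hh : DifferentiableOn ℂ h (ball 0 1))
    {ρ : ℝ} (hρ : |ρ| < 1) : ∫ ζ, h (ρ * ζ) ∂circleMeasure = h 0 := by
  have hcl : closedBall (0 : ℂ) |ρ| ⊆ ball 0 1 := closedBall_subset_ball hρ
  have hdiff : DiffContOnCl ℂ h (ball 0 |ρ|) :=
    (hh.mono (closure_ball_subset_closedBall.trans hcl)).diffContOnCl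
  rw [integral_circleMeasure, ← hdiff.circleAverage,
    Real.circleAverage_eq_circleAverage_zero_one (R := ρ)]
  · simp
  · refine aestronglyMeasurable_circleMeasure (hh.continuousOn.comp (by fun_prop) fun ζ hζ => ?_)
    simpa [mem_sphere_zero_iff_norm.1 hζ] using hρ

lemma ofReal_mul_mem_ball_zero_one {r : ℝ} (hr : |r| < 1) {ζ : ℂ} (hζ : ‖ζ‖ = 1) :
    (r : ℂ) * ζ ∈ ball (0 : ℂ) 1 := by
  simpa [hζ] using hr

lemma eventually_abs_lt_one_nhdsLT : ∀ᶠ r : ℝ in 𝓝[<] 1, |r| < 1 := by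
  filter_upwards [Ioo_mem_nhdsLT (show (-1 : ℝ) < 1 by norm_num)] with r hr
  exact abs_lt.2 hr

lemma aestronglyMeasurable_of_tendsto_radial {E : Type*} [NormedAddCommGroup E] {h hb : ℂ → E}
    (hh : ContinuousOn h (ball 0 1))
    (hlim : ∀ᵐ ζ ∂circleMeasure, Tendsto (fun r : ℝ => h (r * ζ)) (𝓝[<] 1) (𝓝 (hb ζ))) :
    AEStronglyMeasurable hb circleMeasure := by
  have hseq : Tendsto (fun n : ℕ => (n : ℝ) / (n + 1)) atTop (𝓝[<] 1) :=
    tendsto_nhdsWithin_iff.2 ⟨tendsto_natCast_div_add_atTop 1, Eventually.of_forall fun n => by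
      simp [div_lt_one (by positivity : (0 : ℝ) < n + 1)]⟩
  refine aestronglyMeasurable_of_tendsto_ae atTop (fun n => ?_) (hlim.mono fun ζ hζ => hζ.comp hseq)
  refine aestronglyMeasurable_circleMeasure (hh.comp (by fun_prop) fun ζ hζ => ?_)
  refine ofReal_mul_mem_ball_zero_one ?_ (mem_sphere_zero_iff_norm.1 hζ)
  rw [abs_of_nonneg (by positivity), div_lt_one (by positivity)]
  exact lt_add_one _

lemma integral_circleMeasure_of_tendsto_radial {E : Type*} [NormedAddCommGroup E]
    [NormedSpace ℂ E] [CompleteSpace E] {h hb : ℂ → E} (hh : DifferentiableOn ℂ h (ball 0 1))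
    {C : ℝ} (hC : ∀ z ∈ ball (0 : ℂ) 1, ‖h z‖ ≤ C)
    (hlim : ∀ᵐ ζ ∂circleMeasure, Tendsto (fun r : ℝ => h (r * ζ)) (𝓝[<] 1) (𝓝 (hb ζ))) :
    ∫ ζ, hb ζ ∂circleMeasure = h 0 := by
  have hmeas : ∀ᶠ r : ℝ in 𝓝[<] 1, AEStronglyMeasurable (fun ζ => h (r * ζ)) circleMeasure := by
    filter_upwards [eventually_abs_lt_one_nhdsLT] with r hr
    exact aestronglyMeasurable_circleMeasure (hh.continuousOn.comp (by fun_prop) fun ζ hζ =>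
      ofReal_mul_mem_ball_zero_one hr (mem_sphere_zero_iff_norm.1 hζ))
  have hbound : ∀ᶠ r : ℝ in 𝓝[<] 1, ∀ᵐ ζ ∂circleMeasure, ‖h (r * ζ)‖ ≤ C := by
    filter_upwards [eventually_abs_lt_one_nhdsLT] with r hr
    filter_upwards [ae_circleMeasure_norm_eq_one] with ζ hζ
    exact hC _ (ofReal_mul_mem_ball_zero_one hr hζ)
  refine tendsto_nhds_unique (tendsto_integral_filter_of_dominated_convergence (fun _ => C)
    hmeas hbound (integrable_const C) hlim) (tendsto_const_nhds.congr' ?_)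
  filter_upwards [eventually_abs_lt_one_nhdsLT] with r hr
  exact (hh.integral_circleMeasure_comp_ofReal_mul hr).symm

lemma one_sub_le_norm_one_sub_mul {s : ℝ} (hs : 0 ≤ s) {w : ℂ} (hw : ‖w‖ ≤ 1) :
    1 - s ≤ ‖1 - s * w‖ :=
  calc 1 - s ≤ ‖(1 : ℂ)‖ - ‖(s : ℂ) * w‖ := by
        rw [norm_one, norm_mul, norm_real, Real.norm_of_nonneg hs]; nlinarith
    _ ≤ ‖1 - s * w‖ := norm_sub_norm_le _ _

lemma norm_one_sub_mul_one_sub_mul_inv_le_one {s : ℝ} (hs : s ∈ Ico 0 1) {w : ℂ} (hw : ‖w‖ ≤ 1) :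
    ‖(1 - s) * (1 - s * w)⁻¹‖ ≤ 1 := by
  have hpos : 0 < 1 - s := sub_pos.2 hs.2
  have hle := one_sub_le_norm_one_sub_mul hs.1 hw
  rw [norm_mul, norm_inv, ← ofReal_one, ← ofReal_sub, norm_real, Real.norm_of_nonneg hpos.le]
  exact mul_inv_le_one_of_le₀ hle (hpos.le.trans hle)

lemma tendsto_one_sub_mul_one_sub_mul_inv {w : ℂ} (hw : ‖w‖ ≤ 1) :
    Tendsto (fun s : ℝ => (1 - s) * (1 - s * w)⁻¹) (𝓝[<] 1) (𝓝 (if w = 1 then 1 else 0)) := by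
  split_ifs with h
  · subst h
    refine tendsto_const_nhds.congr' ?_
    filter_upwards [self_mem_nhdsWithin] with s hs
    rw [mul_one, mul_inv_cancel₀]
    exact sub_ne_zero.2 (by exact_mod_cast (ne_of_lt hs).symm)
  · have hcont : ContinuousAt (fun s : ℝ => (1 - s) * (1 - s * w)⁻¹) 1 := by
      refine ContinuousAt.mul (by fun_prop) (ContinuousAt.inv₀ (by fun_prop) ?_)
      simpa [sub_eq_zero] using Ne.symm h
    simpa using hcont.tendsto.mono_left nhdsWithin_le_nhds

lemma one_sub_ofReal_mul_ne_zero {s : ℝ} (hs : s ∈ Ico 0 1) {w : ℂ} (hw : ‖w‖ ≤ 1) :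
    1 - s * w ≠ 0 :=
  norm_pos_iff.1 ((sub_pos.2 hs.2).trans_le (one_sub_le_norm_one_sub_mul hs.1 hw))

lemma ae_norm_radialLimit_le {E : Type*} [NormedAddCommGroup E] {h hb : ℂ → E} {C : ℝ}
    (hC : ∀ z ∈ ball (0 : ℂ) 1, ‖h z‖ ≤ C)
    (hlim : ∀ᵐ ζ ∂circleMeasure, Tendsto (fun r : ℝ => h (r * ζ)) (𝓝[<] 1) (𝓝 (hb ζ))) :
    ∀ᵐ ζ ∂circleMeasure, ‖hb ζ‖ ≤ C := by
  filter_upwards [hlim, ae_circleMeasure_norm_eq_one] with ζ hζ hζ1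
  refine le_of_tendsto hζ.norm ?_
  filter_upwards [eventually_abs_lt_one_nhdsLT] with r hr
  exact hC _ (ofReal_mul_mem_ball_zero_one hr hζ1)

lemma integral_circleMeasure_one_sub_mul_one_sub_mul_inv {f fb : ℂ → ℂ}
    (hf : DifferentiableOn ℂ f (ball 0 1)) (hf_le : ∀ z ∈ ball (0 : ℂ) 1, ‖f z‖ ≤ 1)
    (hlim : ∀ᵐ ζ ∂circleMeasure, Tendsto (fun r : ℝ => f (r * ζ)) (𝓝[<] 1) (𝓝 (fb ζ)))
    {s : ℝ} (hs : s ∈ Ico 0 1) :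
    ∫ ζ, (1 - s) * (1 - s * fb ζ)⁻¹ ∂circleMeasure = (1 - s) * (1 - s * f 0)⁻¹ := by
  refine integral_circleMeasure_of_tendsto_radial (C := 1) ?_
    (fun z hz => norm_one_sub_mul_one_sub_mul_inv_le_one hs (hf_le z hz)) ?_
  · exact (differentiableOn_const _).mul (((differentiableOn_const _).sub
      ((differentiableOn_const _).mul hf)).inv
      fun z hz => one_sub_ofReal_mul_ne_zero hs (hf_le z hz))
  · filter_upwards [hlim, ae_norm_radialLimit_le hf_le hlim] with ζ hζ hζ1
    exact tendsto_const_nhds.mul ((tendsto_const_nhds.sub (tendsto_const_nhds.mul hζ)).inv₀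
      (one_sub_ofReal_mul_ne_zero hs hζ1))

lemma ae_radialLimit_ne_one {f fb : ℂ → ℂ} (hf : DifferentiableOn ℂ f (ball 0 1))
    (hmaps : MapsTo f (ball 0 1) (ball 0 1))
    (hlim : ∀ᵐ ζ ∂circleMeasure, Tendsto (fun r : ℝ => f (r * ζ)) (𝓝[<] 1) (𝓝 (fb ζ))) :
    ∀ᵐ ζ ∂circleMeasure, fb ζ ≠ 1 := by
  have hf_le : ∀ z ∈ ball (0 : ℂ) 1, ‖f z‖ ≤ 1 := fun z hz => (mem_ball_zero_iff.1 (hmaps hz)).le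
  have hfb_le := ae_norm_radialLimit_le hf_le hlim
  have hfb_meas : AEMeasurable fb circleMeasure :=
    (aestronglyMeasurable_of_tendsto_radial hf.continuousOn hlim).aemeasurable
  have hf0 : f 0 ≠ 1 := fun h => by simpa [h] using hmaps (mem_ball_self one_pos)
  have hlim0 : Tendsto (fun s : ℝ => (1 - s) * (1 - s * f 0)⁻¹) (𝓝[<] 1) (𝓝 0) := by
    simpa [hf0] using tendsto_one_sub_mul_one_sub_mul_inv (hf_le 0 (mem_ball_self one_pos))
  have hIco : ∀ᶠ s : ℝ in 𝓝[<] 1, s ∈ Ico 0 1 := Ico_mem_nhdsLT one_pos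
  have hdct : Tendsto (fun s : ℝ => ∫ ζ, (1 - s) * (1 - s * fb ζ)⁻¹ ∂circleMeasure) (𝓝[<] 1)
      (𝓝 (∫ ζ, (fb ⁻¹' {1}).indicator (fun _ => (1 : ℂ)) ζ ∂circleMeasure)) := by
    refine tendsto_integral_filter_of_dominated_convergence (fun _ => 1)
      (Eventually.of_forall fun s => ?_) ?_ (integrable_const 1) ?_
    · exact ((by fun_prop : Measurable fun w : ℂ => (1 - s) * (1 - s * w)⁻¹).comp_aemeasurable
        hfb_meas).aestronglyMeasurable
    · filter_upwards [hIco] with s hs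
      filter_upwards [hfb_le] with ζ hζ
      exact norm_one_sub_mul_one_sub_mul_inv_le_one hs hζ
    · filter_upwards [hfb_le] with ζ hζ
      convert tendsto_one_sub_mul_one_sub_mul_inv hζ using 2
      simp [indicator]
  have hind : ∫ ζ, (fb ⁻¹' {1}).indicator (fun _ => (1 : ℂ)) ζ ∂circleMeasure = 0 := by
    refine tendsto_nhds_unique hdct (hlim0.congr' ?_)
    filter_upwards [hIco] with s hs
    exact (integral_circleMeasure_one_sub_mul_one_sub_mul_inv hf hf_le hlim hs).symm
  rw [integral_indicator₀ (hfb_meas.nullMeasurableSet_preimage (measurableSet_singleton 1)),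
    setIntegral_const, smul_eq_zero, measureReal_eq_zero_iff] at hind
  exact measure_eq_zero_iff_ae_notMem.1 (hind.resolve_right one_ne_zero)

lemma ae_radialLimit_ne {θ θb : ℂ → ℂ} (hθ : DifferentiableOn ℂ θ (ball 0 1))
    (hmaps : MapsTo θ (ball 0 1) (ball 0 1))
    (hlim : ∀ᵐ ζ ∂circleMeasure, Tendsto (fun r : ℝ => θ (r * ζ)) (𝓝[<] 1) (𝓝 (θb ζ)))
    {α : ℂ} (hα : ‖α‖ = 1) : ∀ᵐ ζ ∂circleMeasure, θb ζ ≠ α := by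
  have hrot := ae_radialLimit_ne_one (f := fun z => conj α * θ z) (fb := fun ζ => conj α * θb ζ)
    ((differentiableOn_const _).mul hθ) (fun z hz => by simpa [hα] using hmaps hz)
    (hlim.mono fun _ h => tendsto_const_nhds.mul h)
  filter_upwards [hrot] with ζ h hζ
  exact h (by rw [hζ, conj_mul', hα]; norm_num)

lemma norm_exp_ofReal_mul_I_sub_le (t s : ℝ) : ‖exp (t * I) - exp (s * I)‖ ≤ |t - s| := by
  have h : exp (t * I) - exp (s * I) = exp (s * I) * (exp (I * (t - s : ℝ)) - 1) := by
    rw [mul_sub, mul_one, ← exp_add]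
    push_cast
    ring_nf
  rw [h, norm_mul, norm_exp_ofReal_mul_I, one_mul]
  exact Real.norm_exp_I_mul_ofReal_sub_one_le

lemma exists_Icc_subset_preimage_closedBall {ζ : ℂ} (hζ : ‖ζ‖ = 1) {r : ℝ} (hrπ : r ≤ π) :
    ∃ a : ℝ, Icc a (a + r) ⊆ Ioc 0 (2 * π) ∩ (fun t : ℝ => exp (t * I)) ⁻¹' closedBall ζ r := by
  have hζ' : exp (arg ζ * I) = ζ := by simpa [hζ] using norm_mul_exp_arg_mul_I ζ
  obtain ⟨harg₁, harg₂⟩ := arg_mem_Ioc ζ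
  obtain ⟨s, a, hs, hIoc, hIcc⟩ : ∃ s a : ℝ, exp (s * I) = ζ ∧
      Icc a (a + r) ⊆ Ioc 0 (2 * π) ∧ Icc a (a + r) ⊆ Icc (s - r) (s + r) := by
    rcases lt_or_ge 0 (arg ζ) with h | h
    · refine ⟨arg ζ, arg ζ, hζ', fun t ht => ⟨?_, ?_⟩, fun t ht => ⟨?_, ?_⟩⟩ <;>
        linarith [ht.1, ht.2]
    · refine ⟨arg ζ + 2 * π, arg ζ + 2 * π - r, ?_, fun t ht => ⟨?_, ?_⟩, fun t ht => ⟨?_, ?_⟩⟩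
      · rw [ofReal_add, add_mul, exp_add, ofReal_mul, ofReal_ofNat, exp_two_pi_mul_I, mul_one, hζ']
      all_goals linarith [ht.1, ht.2, Real.pi_pos]
  refine ⟨a, fun t ht => ⟨hIoc ht, ?_⟩⟩
  rw [mem_preimage, mem_closedBall, dist_eq_norm, ← hs]
  exact (norm_exp_ofReal_mul_I_sub_le t s).trans (abs_sub_le_iff.2 ⟨by linarith [(hIcc ht).2],
    by linarith [(hIcc ht).1]⟩)

lemma le_circleMeasure_closedBall {ζ : ℂ} (hζ : ‖ζ‖ = 1) {r : ℝ} (hrπ : r ≤ π) :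
    ENNReal.ofReal (r / (2 * π)) ≤ circleMeasure (closedBall ζ r) := by
  obtain ⟨a, ha⟩ := exists_Icc_subset_preimage_closedBall hζ hrπ
  rw [circleMeasure_apply measurableSet_closedBall]
  calc ENNReal.ofReal (r / (2 * π)) = (ENNReal.ofReal (2 * π))⁻¹ * volume (Icc a (a + r)) := by
        rw [Real.volume_Icc, add_sub_cancel_left, ENNReal.ofReal_div_of_pos Real.two_pi_pos,
          ENNReal.div_eq_inv_mul]
    _ ≤ _ := by gcongr

lemma poissonKernel_zero_of_norm_eq_one {w z : ℂ} (hz : ‖z‖ = 1) :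
    poissonKernel 0 w z = (1 - ‖w‖ ^ 2) / ‖z - w‖ ^ 2 := by
  simp [poissonKernel_def, hz]

lemma integral_poissonKernel_zero {σ : Measure ℂ} (hσ : σ (sphere 0 1)ᶜ = 0) (w : ℂ) :
    ∫ z, poissonKernel 0 w z ∂σ = ∫ z, (1 - ‖w‖ ^ 2) / ‖z - w‖ ^ 2 ∂σ := by
  refine integral_congr_ae ?_
  filter_upwards [mem_ae_iff.2 hσ] with z hz
  exact poissonKernel_zero_of_norm_eq_one (mem_sphere_zero_iff_norm.1 hz)

lemma poissonKernel_zero_mem_Icc {w z : ℂ} (hw : ‖w‖ < 1) (hz : ‖z‖ = 1) :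
    poissonKernel 0 w z ∈ Icc ((1 - ‖w‖) / (1 + ‖w‖)) ((1 + ‖w‖) / (1 - ‖w‖)) := by
  have hz' : z ∈ sphere (0 : ℂ) 1 := by simpa using hz
  have hw' : w ∈ ball (0 : ℂ) 1 := by simpa using hw
  rw [poissonKernel_eq_re_herglotzRieszKernel, Function.comp_apply, herglotzRieszKernel_def]
  simpa using And.intro (le_re_herglotzRieszKernel hz' hw') (re_herglotzRieszKernel_le hz' hw')

lemma integrable_poissonKernel_zero {σ : Measure ℂ} [IsFiniteMeasure σ]
    (hσ : σ (sphere 0 1)ᶜ = 0) {w : ℂ} (hw : ‖w‖ < 1) : Integrable (poissonKernel 0 w) σ := by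
  refine Integrable.of_bound
    (Measurable.aestronglyMeasurable (by unfold poissonKernel; fun_prop)) ((1 + ‖w‖) / (1 - ‖w‖)) ?_
  filter_upwards [mem_ae_iff.2 hσ] with z hz
  obtain ⟨hlo, hhi⟩ := poissonKernel_zero_mem_Icc hw (mem_sphere_zero_iff_norm.1 hz)
  rwa [Real.norm_of_nonneg ((div_nonneg (by linarith) (by positivity)).trans hlo)]

lemma inv_four_mul_le_poissonKernel_zero {ζ ξ : ℂ} (hζ : ‖ζ‖ = 1) (hξ : ‖ξ‖ = 1) {r : ℝ}
    (hr₀ : 0 < r) (hr₁ : r ≤ 1) (hξζ : ‖ξ - ζ‖ ≤ r) :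
    (4 * r)⁻¹ ≤ poissonKernel 0 ((1 - r : ℝ) * ζ) ξ := by
  set z : ℂ := (1 - r : ℝ) * ζ
  have hz : ‖z‖ = 1 - r := by
    rw [norm_mul, norm_real, Real.norm_of_nonneg (sub_nonneg.2 hr₁), hζ, mul_one]
  have hζz : ‖ζ - z‖ = r := by
    rw [show ζ - z = r * ζ by simp only [z]; push_cast; ring]
    simp [hζ, abs_of_pos hr₀]
  have hdist : ‖ξ - z‖ ≤ 2 * r := by
    linarith [norm_sub_le_norm_sub_add_norm_sub ξ ζ z]
  have hpos : 0 < ‖ξ - z‖ := by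
    linarith [norm_sub_norm_le ξ z]
  rw [poissonKernel_zero_of_norm_eq_one hξ, hz]
  calc (4 * r)⁻¹ = r / (2 * r) ^ 2 := by field_simp; ring
    _ ≤ (1 - (1 - r) ^ 2) / ‖ξ - z‖ ^ 2 := by gcongr <;> nlinarith

lemma measureReal_closedBall_le_integral_poissonKernel {σ : Measure ℂ} [IsFiniteMeasure σ]
    (hσ : σ (sphere 0 1)ᶜ = 0) {ζ : ℂ} (hζ : ‖ζ‖ = 1) {r : ℝ} (hr₀ : 0 < r) (hr₁ : r ≤ 1) :
    σ.real (closedBall ζ r) ≤ 4 * r * ∫ ξ, poissonKernel 0 ((1 - r : ℝ) * ζ) ξ ∂σ := by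
  set P := poissonKernel 0 ((1 - r : ℝ) * ζ)
  set A := closedBall ζ r ∩ sphere 0 1
  have hz : ‖((1 - r : ℝ) : ℂ) * ζ‖ < 1 := by
    rw [norm_mul, norm_real, Real.norm_of_nonneg (sub_nonneg.2 hr₁), hζ, mul_one]
    linarith
  have hP : Integrable P σ := integrable_poissonKernel_zero hσ hz
  have hPA : ∀ ξ ∈ A, (4 * r)⁻¹ ≤ P ξ := fun ξ hξ =>
    inv_four_mul_le_poissonKernel_zero hζ (mem_sphere_zero_iff_norm.1 hξ.2) hr₀ hr₁
      (mem_closedBall_iff_norm.1 hξ.1)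
  have hP_nonneg : 0 ≤ᵐ[σ] P := by
    filter_upwards [mem_ae_iff.2 hσ] with ξ hξ
    exact (div_nonneg (by linarith) (by positivity)).trans
      (poissonKernel_zero_mem_Icc hz (mem_sphere_zero_iff_norm.1 hξ)).1
  calc σ.real (closedBall ζ r) = 4 * r * (σ.real A • (4 * r)⁻¹) := by
        rw [measureReal_def, measureReal_def, measure_inter_conull hσ, smul_eq_mul]
        field_simp
    _ ≤ 4 * r * ∫ ξ in A, P ξ ∂σ := by
        gcongr
        exact setIntegral_ge_of_const_le
          (measurableSet_closedBall.inter isClosed_sphere.measurableSet) (measure_ne_top σ A) hPA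
          hP.integrableOn
    _ ≤ 4 * r * ∫ ξ, P ξ ∂σ := by
        have := setIntegral_le_integral (s := A) hP hP_nonneg
        gcongr

lemma measure_div_circleMeasure_closedBall_le {σ : Measure ℂ} [IsFiniteMeasure σ]
    (hσ : σ (sphere 0 1)ᶜ = 0) {ζ : ℂ} (hζ : ‖ζ‖ = 1) {r : ℝ} (hr₀ : 0 < r) (hr₁ : r ≤ 1) :
    σ (closedBall ζ r) / circleMeasure (closedBall ζ r) ≤
      ENNReal.ofReal (8 * π * ∫ ξ, poissonKernel 0 ((1 - r : ℝ) * ζ) ξ ∂σ) := by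
  have hσB := measureReal_closedBall_le_integral_poissonKernel hσ hζ hr₀ hr₁
  calc σ (closedBall ζ r) / circleMeasure (closedBall ζ r)
      ≤ ENNReal.ofReal (4 * r * ∫ ξ, poissonKernel 0 ((1 - r : ℝ) * ζ) ξ ∂σ) /
          ENNReal.ofReal (r / (2 * π)) := by
        gcongr
        · exact (ENNReal.le_ofReal_iff_toReal_le (measure_ne_top σ _)
            (measureReal_nonneg.trans hσB)).2 hσB
        · exact le_circleMeasure_closedBall hζ (hr₁.trans (by linarith [Real.pi_gt_three]))
    _ = ENNReal.ofReal (8 * π * ∫ ξ, poissonKernel 0 ((1 - r : ℝ) * ζ) ξ ∂σ) := by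
        rw [← ENNReal.ofReal_div_of_pos (by positivity)]
        congr 1
        field_simp
        ring

lemma tendsto_one_sub_nhdsGT_zero : Tendsto (fun r : ℝ => 1 - r) (𝓝[>] 0) (𝓝[<] 1) := by
  refine tendsto_nhdsWithin_iff.2 ⟨?_, ?_⟩
  · exact ((continuous_const.sub continuous_id).tendsto' 0 1 (sub_zero 1)).mono_left
      nhdsWithin_le_nhds
  · filter_upwards [self_mem_nhdsWithin] with r hr
    simpa using hr

/-- The Clark measure `σ_α` of an inner function `θ` on the unit disc is singular with respect
to the normalized Lebesgue measure `m` on the unit circle. Here `m` is realized as the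
normalized image of Lebesgue measure under `t ↦ exp (i t)`, inner means that the radial
boundary values of `θ` have modulus `1` `m`-a.e., and `σ_α` is characterized by its Poisson
integral. -/
theorem stmt2 (θ : ℂ → ℂ)
    (hθ : DifferentiableOn ℂ θ (ball (0 : ℂ) 1))
    (hθmap : ∀ z ∈ ball (0 : ℂ) 1, θ z ∈ ball (0 : ℂ) 1)
    (m : Measure ℂ)
    (hm : m = (ENNReal.ofReal (2 * Real.pi))⁻¹ •
      Measure.map (fun t : ℝ => Complex.exp (t * Complex.I))
        (volume.restrict (Ioc (0 : ℝ) (2 * Real.pi))))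
    (θb : ℂ → ℂ)
    (hinner : ∀ᵐ ζ ∂m,
      Tendsto (fun r : ℝ => θ (r * ζ)) (nhdsWithin 1 (Iio 1)) (nhds (θb ζ)) ∧ ‖θb ζ‖ = 1)
    (α : ℂ) (hα : ‖α‖ = 1)
    (σ : Measure ℂ) (hσfin : IsFiniteMeasure σ)
    (hσsupp : σ (sphere (0 : ℂ) 1)ᶜ = 0)
    (hσ : ∀ z ∈ ball (0 : ℂ) 1,
      ∫ ζ, (1 - ‖z‖ ^ 2) / ‖ζ - z‖ ^ 2 ∂σ = (1 - ‖θ z‖ ^ 2) / ‖α - θ z‖ ^ 2) :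
    σ ⟂ₘ m := by
  rw [show m = circleMeasure from hm] at hinner ⊢
  have hne := ae_radialLimit_ne hθ hθmap (hinner.mono fun _ h => h.1) hα
  refine Measure.mutuallySingular_of_tendsto_div_closedBall ?_
  filter_upwards [hinner, hne, ae_circleMeasure_norm_eq_one] with ζ ⟨hlim, hθb⟩ hζα hζ
  have hcont : ContinuousAt (fun w : ℂ => (1 - ‖w‖ ^ 2) / ‖α - w‖ ^ 2) (θb ζ) :=
    ContinuousAt.div (by fun_prop) (by fun_prop) (by simpa [sub_eq_zero] using hζα.symm)
  have hu := hcont.tendsto.comp (hlim.comp tendsto_one_sub_nhdsGT_zero)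
  refine tendsto_of_tendsto_of_tendsto_of_le_of_le' (h := fun r => ENNReal.ofReal
      (8 * π * ((1 - ‖θ ((1 - r : ℝ) * ζ)‖ ^ 2) / ‖α - θ ((1 - r : ℝ) * ζ)‖ ^ 2)))
    tendsto_const_nhds (by simpa [hθb] using ENNReal.tendsto_ofReal (hu.const_mul (8 * π)))
    (Eventually.of_forall fun _ => zero_le) ?_
  filter_upwards [Ioc_mem_nhdsGT one_pos] with r hr
  have hz : ((1 - r : ℝ) : ℂ) * ζ ∈ ball (0 : ℂ) 1 :=
    ofReal_mul_mem_ball_zero_one (by rw [abs_lt]; constructor <;> linarith [hr.1, hr.2]) hζ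
  rw [← hσ _ hz, ← integral_poissonKernel_zero hσsupp]
  exact measure_div_circleMeasure_closedBall_le hσsupp hζ hr.1 hr.2
end

section
/- Let b : D → D be holomorphic and α unimodular, and let σ_α be the Clark measure of b. Then for all z, w ∈ D: ∫_T C(z,ζ) C(ζ,w) dσ_α(ζ) = (1 − b(z) conj(b(w))) / ((1 − conj(α) b(z)) (1 − α conj(b(w)))) · C(z,w), where C(z,ζ) = 1/(1 − z conj(ζ)) is the Cauchy kernel. -/
open Complex ComplexConjugate Metric MeasureTheory Set

/-!
Write `F z = ∫ C(z,ζ) dσ(ζ)`. On the circle the Poisson kernel is `2 Re C(z,ζ) - 1`, so the Clark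
condition says `Re (2 F z - σ(T)) = Re (2 C(b z, α) - 1)`. Hence `F - C(b ·, α)` is holomorphic
with constant real part, i.e. a constant `c` with `2 Re c = σ(T) - 1`. On the circle
`C(z,ζ) C(ζ,w) = C(z,w) (C(z,ζ) + C(ζ,w) - 1)`, so the double integral is
`C(z,w) (F z + conj (F w) - σ(T)) = C(z,w) (C(b z, α) + C(α, b w) - 1)`, and the same
partial-fraction identity, now at the unimodular point `α`, evaluates the bracket.
-/

noncomputable def cauchyKernel (z w : ℂ) : ℂ := (1 - z * conj w)⁻¹

lemma conj_cauchyKernel (z w : ℂ) : conj (cauchyKernel z w) = cauchyKernel w z := by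
  simp only [cauchyKernel, map_inv₀, map_sub, map_one, map_mul, conj_conj, mul_comm]

lemma one_sub_mul_conj_ne_zero {z w : ℂ} (hz : ‖z‖ < 1) (hw : ‖w‖ ≤ 1) : 1 - z * conj w ≠ 0 := by
  have : ‖z * conj w‖ < 1 := by
    rw [norm_mul, RCLike.norm_conj]
    nlinarith [norm_nonneg z]
  intro h
  rw [← sub_eq_zero.mp h, norm_one] at this
  exact this.false

lemma one_sub_mul_conj_ne_zero' {z w : ℂ} (hz : ‖z‖ ≤ 1) (hw : ‖w‖ < 1) : 1 - z * conj w ≠ 0 := by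
  rw [← map_ne_zero conj, map_sub, map_one, map_mul, conj_conj, mul_comm]
  exact one_sub_mul_conj_ne_zero hw hz

lemma norm_cauchyKernel_le {z w : ℂ} (hz : ‖z‖ < 1) (hw : ‖w‖ ≤ 1) :
    ‖cauchyKernel z w‖ ≤ (1 - ‖z‖)⁻¹ := by
  have : 1 - ‖z‖ ≤ ‖1 - z * conj w‖ := by
    have h := norm_sub_norm_le (1 : ℂ) (z * conj w)
    rw [norm_one, norm_mul, RCLike.norm_conj] at h
    nlinarith [norm_nonneg z]
  rw [cauchyKernel, norm_inv]
  exact inv_anti₀ (by linarith) this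

lemma mul_conj_eq_one {ζ : ℂ} (hζ : ‖ζ‖ = 1) : ζ * conj ζ = 1 := by
  rw [mul_conj, normSq_eq_norm_sq, hζ, one_pow, ofReal_one]

lemma cauchyKernel_add_cauchyKernel_sub_one {z w ζ : ℂ} (hζ : ‖ζ‖ = 1)
    (hz : 1 - z * conj ζ ≠ 0) (hw : 1 - ζ * conj w ≠ 0) :
    cauchyKernel z ζ + cauchyKernel ζ w - 1 =
      (1 - z * conj w) * (cauchyKernel z ζ * cauchyKernel ζ w) := by
  unfold cauchyKernel
  field_simp
  linear_combination (-z * conj w) * mul_conj_eq_one hζ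

lemma poisson_eq_two_mul_re_cauchyKernel_sub_one {z ζ : ℂ} (hz : ‖z‖ < 1) (hζ : ‖ζ‖ = 1) :
    (1 - ‖z‖ ^ 2) / ‖ζ - z‖ ^ 2 = 2 * (cauchyKernel z ζ).re - 1 := by
  have hherglotz : (ζ + z) / (ζ - z) = 2 * cauchyKernel z ζ - 1 := by
    have : ζ - z ≠ 0 := sub_ne_zero.mpr fun h => by rw [h] at hζ; linarith
    have := one_sub_mul_conj_ne_zero hz hζ.le
    unfold cauchyKernel
    field_simp
    linear_combination (-2 * z) * mul_conj_eq_one hζ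
  have := congrFun (poissonKernel_eq_re_herglotzRieszKernel (c := 0) (w := z)) ζ
  simp only [poissonKernel, herglotzRieszKernel, sub_zero, hζ, one_pow, Function.comp_apply]
    at this
  rw [this, hherglotz]
  simp

noncomputable def cauchyTransform (σ : Measure ℂ) (z : ℂ) : ℂ := ∫ ζ, cauchyKernel z ζ ∂σ

lemma hasDerivAt_cauchyKernel_left {x ζ : ℂ} (h : 1 - x * conj ζ ≠ 0) :
    HasDerivAt (cauchyKernel · ζ) (conj ζ * cauchyKernel x ζ ^ 2) x := by
  have := (((hasDerivAt_id x).mul_const (conj ζ)).const_sub 1).inv h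
  simpa [cauchyKernel, div_eq_mul_inv, Pi.inv_def] using this

lemma measurable_cauchyKernel_left (z : ℂ) : Measurable (cauchyKernel z) := by
  unfold cauchyKernel; fun_prop

lemma measurable_cauchyKernel_right (w : ℂ) : Measurable (cauchyKernel · w) := by
  unfold cauchyKernel; fun_prop

lemma integral_cauchyKernel_right (σ : Measure ℂ) (w : ℂ) :
    ∫ ζ, cauchyKernel ζ w ∂σ = conj (cauchyTransform σ w) := by
  simp only [cauchyTransform, ← integral_conj, conj_cauchyKernel]

lemma ae_norm_eq_one {σ : Measure ℂ} (hσ : σ (sphere (0 : ℂ) 1)ᶜ = 0) : ∀ᵐ ζ ∂σ, ‖ζ‖ = 1 := by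
  filter_upwards [measure_eq_zero_iff_ae_notMem.mp hσ] with ζ hζ
  simpa using hζ

section SupportedOnCircle

variable {σ : Measure ℂ} [IsFiniteMeasure σ] (hσ : σ (sphere (0 : ℂ) 1)ᶜ = 0)
include hσ

lemma integrable_cauchyKernel_left {z : ℂ} (hz : ‖z‖ < 1) : Integrable (cauchyKernel z) σ := by
  refine Integrable.mono' (integrable_const (1 - ‖z‖)⁻¹)
    (measurable_cauchyKernel_left z).aestronglyMeasurable ?_
  filter_upwards [ae_norm_eq_one hσ] with ζ hζ
  exact norm_cauchyKernel_le hz hζ.le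

lemma integrable_cauchyKernel_right {w : ℂ} (hw : ‖w‖ < 1) :
    Integrable (cauchyKernel · w) σ := by
  refine (integrable_cauchyKernel_left hσ hw).mono
    (measurable_cauchyKernel_right w).aestronglyMeasurable (.of_forall fun ζ => ?_)
  rw [← conj_cauchyKernel, RCLike.norm_conj]

lemma integral_poisson_eq_re_cauchyTransform {z : ℂ} (hz : ‖z‖ < 1) :
    ∫ ζ, (1 - ‖z‖ ^ 2) / ‖ζ - z‖ ^ 2 ∂σ = 2 * (cauchyTransform σ z).re - σ.real univ := by
  have hint := integrable_cauchyKernel_left hσ hz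
  have hint_re : Integrable (fun ζ => (cauchyKernel z ζ).re) σ := hint.re
  calc ∫ ζ, (1 - ‖z‖ ^ 2) / ‖ζ - z‖ ^ 2 ∂σ = ∫ ζ, (2 * (cauchyKernel z ζ).re - 1) ∂σ :=
        integral_congr_ae <| (ae_norm_eq_one hσ).mono fun ζ hζ =>
          poisson_eq_two_mul_re_cauchyKernel_sub_one hz hζ
    _ = 2 * (cauchyTransform σ z).re - σ.real univ := by
      rw [integral_sub (hint_re.const_mul 2) (integrable_const 1), integral_const_mul,
        integral_const, smul_eq_mul, mul_one, cauchyTransform]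
      exact congrArg (2 * · - _) (integral_re hint)

lemma differentiableOn_cauchyTransform : DifferentiableOn ℂ (cauchyTransform σ) (ball 0 1) := by
  intro z₀ hz₀
  rw [mem_ball_zero_iff] at hz₀
  set ε := (1 - ‖z₀‖) / 2
  have hε : 0 < ε := by simp only [ε]; linarith
  have hnear : ∀ x ∈ ball z₀ ε, ‖x‖ < 1 - ε := fun x hx => by
    have := norm_le_norm_add_norm_sub' x z₀
    rw [mem_ball, dist_eq_norm] at hx
    simp only [ε] at *; linarith
  have hbound : ∀ᵐ ζ ∂σ, ∀ x ∈ ball z₀ ε, ‖conj ζ * cauchyKernel x ζ ^ 2‖ ≤ ε⁻¹ ^ 2 := by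
    filter_upwards [ae_norm_eq_one hσ] with ζ hζ x hx
    have hx := hnear x hx
    have := (norm_cauchyKernel_le (hx.trans_le (by linarith)) hζ.le).trans
      (inv_anti₀ hε (show ε ≤ 1 - ‖x‖ by linarith))
    rw [norm_mul, RCLike.norm_conj, hζ, one_mul, norm_pow]
    gcongr
  have hderiv : ∀ᵐ ζ ∂σ, ∀ x ∈ ball z₀ ε,
      HasDerivAt (cauchyKernel · ζ) (conj ζ * cauchyKernel x ζ ^ 2) x := by
    filter_upwards [ae_norm_eq_one hσ] with ζ hζ x hx
    exact hasDerivAt_cauchyKernel_left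
      (one_sub_mul_conj_ne_zero ((hnear x hx).trans_le (by linarith)) hζ.le)
  exact (hasDerivAt_integral_of_dominated_loc_of_deriv_le (ball_mem_nhds z₀ hε)
    (.of_forall fun x => (measurable_cauchyKernel_left x).aestronglyMeasurable)
    (integrable_cauchyKernel_left hσ hz₀)
    (by unfold cauchyKernel; fun_prop) hbound
    (integrable_const _) hderiv).2.differentiableAt.differentiableWithinAt

lemma integral_cauchyKernel_mul_cauchyKernel {z w : ℂ} (hz : ‖z‖ < 1) (hw : ‖w‖ < 1) :
    ∫ ζ, cauchyKernel z ζ * cauchyKernel ζ w ∂σ =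
      cauchyKernel z w * (cauchyTransform σ z + conj (cauchyTransform σ w) - σ.real univ) := by
  have hsplit : ∀ᵐ ζ ∂σ, cauchyKernel z ζ * cauchyKernel ζ w =
      cauchyKernel z w * (cauchyKernel z ζ + cauchyKernel ζ w - 1) := by
    have hzw : cauchyKernel z w * (1 - z * conj w) = 1 :=
      inv_mul_cancel₀ (one_sub_mul_conj_ne_zero hz hw.le)
    filter_upwards [ae_norm_eq_one hσ] with ζ hζ
    rw [cauchyKernel_add_cauchyKernel_sub_one hζ (one_sub_mul_conj_ne_zero hz hζ.le)
      (one_sub_mul_conj_ne_zero' hζ.le hw), ← mul_assoc, hzw, one_mul]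
  have hz_int := integrable_cauchyKernel_left hσ hz
  have hw_int := integrable_cauchyKernel_right hσ hw
  rw [integral_congr_ae hsplit, integral_const_mul,
    integral_sub (f := fun ζ => cauchyKernel z ζ + cauchyKernel ζ w) (hz_int.add hw_int)
      (integrable_const 1),
    integral_add hz_int hw_int,
    integral_cauchyKernel_right, integral_const, Complex.real_smul, mul_one]
  rfl

end SupportedOnCircle

lemma cauchyTransform_eq_cauchyKernel_add_const {b : ℂ → ℂ}
    (hb : DifferentiableOn ℂ b (ball 0 1)) (hbmap : MapsTo b (ball 0 1) (ball 0 1))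
    {α : ℂ} (hα : ‖α‖ = 1) {σ : Measure ℂ} [IsFiniteMeasure σ]
    (hσsupp : σ (sphere (0 : ℂ) 1)ᶜ = 0)
    (hσ : ∀ z ∈ ball (0 : ℂ) 1,
      ∫ ζ, (1 - ‖z‖ ^ 2) / ‖ζ - z‖ ^ 2 ∂σ = (1 - ‖b z‖ ^ 2) / ‖α - b z‖ ^ 2) :
    ∃ c : ℂ, 2 * c.re = σ.real univ - 1 ∧
      ∀ z ∈ ball (0 : ℂ) 1, cauchyTransform σ z = cauchyKernel (b z) α + c := by
  have hbz : ∀ z ∈ ball (0 : ℂ) 1, ‖b z‖ < 1 := fun z hz => mem_ball_zero_iff.mp (hbmap hz)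
  set f := fun z => cauchyTransform σ z - cauchyKernel (b z) α
  have hf : DifferentiableOn ℂ f (ball 0 1) :=
    (differentiableOn_cauchyTransform hσsupp).sub <|
      ((differentiableOn_const 1).sub (hb.mul_const _)).inv fun z hz =>
        one_sub_mul_conj_ne_zero (hbz z hz) hα.le
  have hf_re : ∀ z ∈ ball (0 : ℂ) 1, (f z).re = (σ.real univ - 1) / 2 := fun z hz => by
    have := hσ z hz
    rw [integral_poisson_eq_re_cauchyTransform hσsupp (mem_ball_zero_iff.mp hz),
      poisson_eq_two_mul_re_cauchyKernel_sub_one (hbz z hz) hα] at this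
    simp only [f, sub_re]
    linarith
  obtain ⟨c, hc⟩ := (hf.analyticOnNhd isOpen_ball).eq_const_of_re_eq_const hf_re isOpen_ball
    (isConnected_ball one_pos)
  refine ⟨c, ?_, fun z hz => eq_add_of_sub_eq' (hc z hz)⟩
  rw [← hc 0 (mem_ball_self one_pos), hf_re 0 (mem_ball_self one_pos)]
  ring

/-- Proposition 2.1 (one variable): for a holomorphic `b : D → D`, unimodular `α`, and the
Clark measure `σ_α` of `b`, the double Cauchy integral identity
`∫ C(z,ζ) C(ζ,w) dσ_α(ζ) = (1 - b z conj(b w)) / ((1 - conj α · b z)(1 - α · conj (b w))) · C(z,w)`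
holds for all `z, w` in the disc, where `C(z,ζ) = (1 - z conj ζ)⁻¹`. -/
theorem stmt3 (b : ℂ → ℂ)
    (hb : DifferentiableOn ℂ b (ball (0 : ℂ) 1))
    (hbmap : ∀ z ∈ ball (0 : ℂ) 1, b z ∈ ball (0 : ℂ) 1)
    (α : ℂ) (hα : ‖α‖ = 1)
    (σ : Measure ℂ) (hσfin : IsFiniteMeasure σ)
    (hσsupp : σ (sphere (0 : ℂ) 1)ᶜ = 0)
    (hσ : ∀ z ∈ ball (0 : ℂ) 1,
      ∫ ζ, (1 - ‖z‖ ^ 2) / ‖ζ - z‖ ^ 2 ∂σ = (1 - ‖b z‖ ^ 2) / ‖α - b z‖ ^ 2) :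
    ∀ z ∈ ball (0 : ℂ) 1, ∀ w ∈ ball (0 : ℂ) 1,
      ∫ ζ, (1 - z * (starRingEnd ℂ) ζ)⁻¹ * (1 - ζ * (starRingEnd ℂ) w)⁻¹ ∂σ =
        (1 - b z * (starRingEnd ℂ) (b w)) /
          ((1 - (starRingEnd ℂ) α * b z) * (1 - α * (starRingEnd ℂ) (b w))) *
          (1 - z * (starRingEnd ℂ) w)⁻¹ := by
  intro z hz w hw
  obtain ⟨c, hc_re, hc⟩ := cauchyTransform_eq_cauchyKernel_add_const hb hbmap hα hσsupp hσ
  have hbz : ‖b z‖ < 1 := mem_ball_zero_iff.mp (hbmap z hz)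
  have hbw : ‖b w‖ < 1 := mem_ball_zero_iff.mp (hbmap w hw)
  have hc_conj : c + conj c = σ.real univ - 1 := by
    rw [add_conj, hc_re, ofReal_sub, ofReal_one]
  calc ∫ ζ, cauchyKernel z ζ * cauchyKernel ζ w ∂σ
      = cauchyKernel z w * (cauchyTransform σ z + conj (cauchyTransform σ w) - σ.real univ) :=
        integral_cauchyKernel_mul_cauchyKernel hσsupp (mem_ball_zero_iff.mp hz)
          (mem_ball_zero_iff.mp hw)
    _ = cauchyKernel z w * (cauchyKernel (b z) α + cauchyKernel α (b w) - 1) := by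
        rw [hc z hz, hc w hw, map_add, conj_cauchyKernel]
        linear_combination cauchyKernel z w * hc_conj
    _ = _ := by
        rw [cauchyKernel_add_cauchyKernel_sub_one hα (one_sub_mul_conj_ne_zero hbz hα.le)
          (one_sub_mul_conj_ne_zero' hα.le hbw), div_eq_mul_inv, mul_inv, mul_comm (conj α)]
        simp only [cauchyKernel]
        ring
end

section
/- Let μ be a finite complex Borel measure on the unit circle T whose Cauchy transform μ₊(z) = ∫_T (1 − z conj(ζ))^{-1} dμ(ζ) vanishes identically on D. Then for every bounded sequence (f_j) in the disc algebra A(D) converging pointwise to 0 on D, lim_j ∫_T f_j d(conj μ) = 0. -/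
open Complex Metric MeasureTheory Set Filter


lemma coeff_zero_of_hasSum_zero {c : ℕ → ℂ} {C : ℝ}
    (hC : ∀ m, ‖c m‖ ≤ C)
    (hc : ∀ z : ℂ, ‖z‖ < 1 → HasSum (fun m => z ^ m * c m) 0) :
    ∀ n, c n = 0 := by
  have hC0 : 0 ≤ C := le_trans (norm_nonneg _) (hC 0)
  intro n
  induction n using Nat.strong_induction_on with
  | _ n IH =>
  have key : ∀ t : ℝ, 0 < t → t ≤ 1 / 2 → ‖c n‖ ≤ 2 * C * t := by
    intro t ht ht2
    have ht1 : t < 1 := lt_of_le_of_lt ht2 (by norm_num)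
    have hz : ‖(t : ℂ)‖ < 1 := by
      rwa [Complex.norm_real, Real.norm_eq_abs, abs_of_pos ht]
    have hs := hc (t : ℂ) hz
    have hsum0 : (∑ i ∈ Finset.range n, (t : ℂ) ^ i * c i) = 0 := by
      apply Finset.sum_eq_zero
      intro i hi
      rw [IH i (Finset.mem_range.mp hi), mul_zero]
    have htail : HasSum (fun m => (t : ℂ) ^ (m + n) * c (m + n)) 0 := by
      have := (hasSum_nat_add_iff' (f := fun m => (t : ℂ) ^ m * c m) n).mpr hs
      simpa [hsum0] using this
    have hpeel : HasSum (fun m => (t : ℂ) ^ (m + 1 + n) * c (m + 1 + n))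
        (0 - ∑ i ∈ Finset.range 1, (t : ℂ) ^ (i + n) * c (i + n)) :=
      (hasSum_nat_add_iff' (f := fun m => (t : ℂ) ^ (m + n) * c (m + n)) 1).mpr htail
    have hval : HasSum (fun m => (t : ℂ) ^ (m + 1 + n) * c (m + 1 + n))
        (-((t : ℂ) ^ n * c n)) := by
      simpa using hpeel
    have hnormsum : ∀ m : ℕ, ‖(t : ℂ) ^ (m + 1 + n) * c (m + 1 + n)‖ ≤ C * t ^ (n + 1) * t ^ m := by
      intro m
      rw [norm_mul, norm_pow, Complex.norm_real, Real.norm_eq_abs, abs_of_pos ht]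
      calc t ^ (m + 1 + n) * ‖c (m + 1 + n)‖ ≤ t ^ (m + 1 + n) * C := by
            apply mul_le_mul_of_nonneg_left (hC _) (pow_nonneg ht.le _)
        _ = C * t ^ (n + 1) * t ^ m := by ring
    have hsummable : Summable fun m => C * t ^ (n + 1) * t ^ m :=
      (summable_geometric_of_lt_one ht.le ht1).mul_left _
    have hsummable' : Summable fun m => ‖(t : ℂ) ^ (m + 1 + n) * c (m + 1 + n)‖ :=
      Summable.of_nonneg_of_le (fun m => norm_nonneg _) hnormsum hsummable
    have heq : -((t : ℂ) ^ n * c n) = ∑' m, (t : ℂ) ^ (m + 1 + n) * c (m + 1 + n) :=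
      hval.tsum_eq.symm
    have hbound : ‖(t : ℂ) ^ n * c n‖ ≤ C * t ^ (n + 1) * (1 - t)⁻¹ := by
      rw [← norm_neg, heq]
      calc ‖∑' m, (t : ℂ) ^ (m + 1 + n) * c (m + 1 + n)‖
          ≤ ∑' m, ‖(t : ℂ) ^ (m + 1 + n) * c (m + 1 + n)‖ := norm_tsum_le_tsum_norm hsummable'
        _ ≤ ∑' m, C * t ^ (n + 1) * t ^ m := Summable.tsum_le_tsum hnormsum hsummable' hsummable
        _ = C * t ^ (n + 1) * ∑' m, t ^ m := tsum_mul_left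
        _ = C * t ^ (n + 1) * (1 - t)⁻¹ := by rw [tsum_geometric_of_lt_one ht.le ht1]
    have hinv : (1 - t)⁻¹ ≤ 2 := by
      rw [inv_le_comm₀ (by linarith) (by norm_num)]
      linarith
    have htn : ‖(t : ℂ) ^ n * c n‖ = t ^ n * ‖c n‖ := by
      rw [norm_mul, norm_pow, Complex.norm_real, Real.norm_eq_abs, abs_of_pos ht]
    have h2 : t ^ n * ‖c n‖ ≤ t ^ n * (2 * C * t) := by
      rw [← htn]
      calc ‖(t : ℂ) ^ n * c n‖ ≤ C * t ^ (n + 1) * (1 - t)⁻¹ := hbound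
        _ ≤ C * t ^ (n + 1) * 2 := by
            apply mul_le_mul_of_nonneg_left hinv
            positivity
        _ = t ^ n * (2 * C * t) := by ring
    exact le_of_mul_le_mul_left h2 (pow_pos ht n)
  have hk : ∀ k : ℕ, ‖c n‖ ≤ 2 * C * (((k : ℝ) + 2)⁻¹) := by
    intro k
    apply key
    · positivity
    · rw [inv_le_comm₀ (by positivity) (by norm_num)]
      have : (0:ℝ) ≤ (k:ℝ) := Nat.cast_nonneg k
      linarith
  have htend : Tendsto (fun k : ℕ => 2 * C * (((k : ℝ) + 2)⁻¹)) atTop (nhds 0) := by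
    have h1 : Tendsto (fun k : ℕ => ((k : ℝ) + 2)⁻¹) atTop (nhds 0) :=
      tendsto_inv_atTop_zero.comp
        (tendsto_atTop_add_const_right atTop 2 tendsto_natCast_atTop_atTop)
    simpa using h1.const_mul (2 * C)
  have hle : ‖c n‖ ≤ 0 := ge_of_tendsto' htend hk
  exact norm_le_zero_iff.mp hle


lemma moments_vanish (ν : Measure ℂ) [IsFiniteMeasure ν]
    (hae : ∀ᵐ ζ ∂ν, ‖ζ‖ = 1)
    (h : ℂ → ℂ) (hint : Integrable h ν)
    (hcauchy : ∀ z ∈ ball (0 : ℂ) 1,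
      ∫ ζ, h ζ * (1 - z * (starRingEnd ℂ) ζ)⁻¹ ∂ν = 0) :
    ∀ n : ℕ, ∫ ζ, ((starRingEnd ℂ) ζ) ^ n * h ζ ∂ν = 0 := by
  set c : ℕ → ℂ := fun n => ∫ ζ, ((starRingEnd ℂ) ζ) ^ n * h ζ ∂ν with hc_def
  set C : ℝ := ∫ ζ, ‖h ζ‖ ∂ν with hC_def
  have hconjcont : Continuous (starRingEnd ℂ) := RCLike.continuous_conj
  have hcint : ∀ n : ℕ, Integrable (fun ζ => ((starRingEnd ℂ) ζ) ^ n * h ζ) ν := by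
    intro n
    refine Integrable.mono' hint.norm
      (((hconjcont.pow n).aestronglyMeasurable).mul hint.aestronglyMeasurable) ?_
    filter_upwards [hae] with ζ hζ
    simp [norm_mul, norm_pow, hζ]
  have hC : ∀ m, ‖c m‖ ≤ C := by
    intro m
    refine le_trans (norm_integral_le_integral_norm _) ?_
    apply integral_mono_ae (hcint m).norm hint.norm
    filter_upwards [hae] with ζ hζ
    simp [norm_mul, norm_pow, hζ]
  have hgeom : ∀ z : ℂ, ‖z‖ < 1 → HasSum (fun m => z ^ m * c m) 0 := by
    intro z hz
    set F : ℕ → ℂ → ℂ := fun n ζ => z ^ n * (((starRingEnd ℂ) ζ) ^ n * h ζ) with hF_def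
    have hFint : ∀ n, Integrable (F n) ν := fun n => (hcint n).const_mul _
    have hFnorm : ∀ n, (∫ ζ, ‖F n ζ‖ ∂ν) ≤ ‖z‖ ^ n * C := by
      intro n
      have : (∫ ζ, ‖F n ζ‖ ∂ν) ≤ ∫ ζ, ‖z‖ ^ n * ‖h ζ‖ ∂ν := by
        apply integral_mono_ae (hFint n).norm (hint.norm.const_mul _)
        filter_upwards [hae] with ζ hζ
        simp [hF_def, norm_mul, norm_pow, hζ]
      rwa [integral_const_mul] at this
    have hsumnorm : Summable fun n => ∫ ζ, ‖F n ζ‖ ∂ν := by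
      refine Summable.of_nonneg_of_le (fun n => integral_nonneg fun _ => norm_nonneg _)
        hFnorm ?_
      exact (summable_geometric_of_lt_one (norm_nonneg z) hz).mul_right C
    have key := hasSum_integral_of_summable_integral_norm (μ := ν) hFint hsumnorm
    have htsum : ∫ ζ, (∑' n, F n ζ) ∂ν = 0 := by
      rw [← hcauchy z (mem_ball_zero_iff.mpr hz)]
      apply integral_congr_ae
      filter_upwards [hae] with ζ hζ
      have hzζ : ‖z * (starRingEnd ℂ) ζ‖ < 1 := by
        rw [norm_mul]
        simp only [RCLike.norm_conj, hζ, mul_one]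
        exact hz
      have hgs : HasSum (fun n : ℕ => (z * (starRingEnd ℂ) ζ) ^ n)
          (1 - z * (starRingEnd ℂ) ζ)⁻¹ := hasSum_geometric_of_norm_lt_one hzζ
      have hgs2 : HasSum (fun n : ℕ => (z * (starRingEnd ℂ) ζ) ^ n * h ζ)
          ((1 - z * (starRingEnd ℂ) ζ)⁻¹ * h ζ) := hgs.mul_right _
      have : (fun n : ℕ => (z * (starRingEnd ℂ) ζ) ^ n * h ζ) = fun n => F n ζ := by
        funext n
        simp only [hF_def, mul_pow]
        ring
      rw [this] at hgs2
      rw [hgs2.tsum_eq]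
      ring
    have hintF : ∀ n, ∫ ζ, F n ζ ∂ν = z ^ n * c n := by
      intro n
      simp only [hF_def]
      rw [integral_const_mul]
    rw [htsum] at key
    have : (fun n => ∫ ζ, F n ζ ∂ν) = fun n => z ^ n * c n := funext hintF
    rwa [this] at key
  exact coeff_zero_of_hasSum_zero hC hgeom


lemma annihilates (ν : Measure ℂ) [IsFiniteMeasure ν]
    (hae : ∀ᵐ ζ ∂ν, ‖ζ‖ = 1)
    (h : ℂ → ℂ) (hint : Integrable h ν)
    (hmom : ∀ n : ℕ, ∫ ζ, ζ ^ n * (starRingEnd ℂ) (h ζ) ∂ν = 0)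
    (f : ℂ → ℂ) (hfc : ContinuousOn f (closedBall (0 : ℂ) 1))
    (hfd : DifferentiableOn ℂ f (ball (0 : ℂ) 1))
    (M : ℝ) (hM : ∀ z ∈ closedBall (0 : ℂ) 1, ‖f z‖ ≤ M) :
    ∫ ζ, f ζ * (starRingEnd ℂ) (h ζ) ∂ν = 0 := by
  set C : ℝ := ∫ ζ, ‖h ζ‖ ∂ν with hC_def
  have hconj : AEStronglyMeasurable (fun ζ => (starRingEnd ℂ) (h ζ)) ν :=
    RCLike.continuous_conj.comp_aestronglyMeasurable hint.aestronglyMeasurable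
  -- power series for f on the unit ball
  have hdc : DiffContOnCl ℂ f (ball (0 : ℂ) ((1 : NNReal) : ℝ)) := by
    refine ⟨by simpa using hfd, ?_⟩
    rw [NNReal.coe_one, closure_ball (0 : ℂ) one_ne_zero]
    exact hfc
  have hps : HasFPowerSeriesOnBall f (cauchyPowerSeries f 0 1) 0 ((1 : NNReal) : ENNReal) :=
    hdc.hasFPowerSeriesOnBall one_pos
  set p := cauchyPowerSeries f 0 1 with hp_def
  -- the integral against dilates vanishes
  have hzero_r : ∀ r : ℝ, 0 ≤ r → r < 1 →
      ∫ ζ, f ((r : ℂ) * ζ) * (starRingEnd ℂ) (h ζ) ∂ν = 0 := by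
    intro r hr0 hr1
    have hrad : ((r.toNNReal : NNReal) : ENNReal) < p.radius := by
      refine lt_of_lt_of_le ?_ hps.r_le
      rw [ENNReal.coe_lt_coe]
      rw [← Real.toNNReal_one]
      exact (Real.toNNReal_lt_toNNReal_iff one_pos).mpr hr1
    have hsum_p : Summable fun n => ‖p n‖ * r ^ n := by
      have := p.summable_norm_mul_pow hrad
      simpa [Real.coe_toNNReal r hr0] using this
    set F : ℕ → ℂ → ℂ := fun n ζ => ((r : ℂ) * ζ) ^ n * p.coeff n * (starRingEnd ℂ) (h ζ)
      with hF_def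
    have hnormF : ∀ n, ∀ᵐ ζ ∂ν, ‖F n ζ‖ ≤ ‖p n‖ * r ^ n * ‖h ζ‖ := by
      intro n
      filter_upwards [hae] with ζ hζ
      simp only [hF_def, norm_mul, norm_pow, Complex.norm_real, Real.norm_eq_abs,
        _root_.abs_of_nonneg hr0, hζ, mul_one, RCLike.norm_conj,
        FormalMultilinearSeries.norm_apply_eq_norm_coef]
      exact le_of_eq (by ring)
    have hFint : ∀ n, Integrable (F n) ν := by
      intro n
      refine Integrable.mono' (hint.norm.const_mul (‖p n‖ * r ^ n)) ?_ (hnormF n)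
      exact ((continuous_const.mul continuous_id).pow n |>.mul
        continuous_const).aestronglyMeasurable.mul hconj
    have hFnorm : ∀ n, (∫ ζ, ‖F n ζ‖ ∂ν) ≤ ‖p n‖ * r ^ n * C := by
      intro n
      have : (∫ ζ, ‖F n ζ‖ ∂ν) ≤ ∫ ζ, ‖p n‖ * r ^ n * ‖h ζ‖ ∂ν :=
        integral_mono_ae (hFint n).norm ((hint.norm.const_mul _)) (hnormF n)
      rwa [integral_const_mul] at this
    have hsumnorm : Summable fun n => ∫ ζ, ‖F n ζ‖ ∂ν := by
      refine Summable.of_nonneg_of_le (fun n => integral_nonneg fun _ => norm_nonneg _)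
        hFnorm ?_
      exact hsum_p.mul_right C
    have key := hasSum_integral_of_summable_integral_norm (μ := ν) hFint hsumnorm
    have hintF : ∀ n, ∫ ζ, F n ζ ∂ν = 0 := by
      intro n
      have heq : F n = fun ζ => ((r : ℂ) ^ n * p.coeff n) * (ζ ^ n * (starRingEnd ℂ) (h ζ)) := by
        funext ζ
        simp only [hF_def, mul_pow]
        ring
      rw [heq, integral_const_mul, hmom n, mul_zero]
    have htsum : ∫ ζ, (∑' n, F n ζ) ∂ν = ∫ ζ, f ((r : ℂ) * ζ) * (starRingEnd ℂ) (h ζ) ∂ν := by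
      apply integral_congr_ae
      filter_upwards [hae] with ζ hζ
      have hylt : ‖(r : ℂ) * ζ‖ < 1 := by
        rw [norm_mul, Complex.norm_real, Real.norm_eq_abs, _root_.abs_of_nonneg hr0, hζ, mul_one]
        exact hr1
      have hmem : (r : ℂ) * ζ ∈ Metric.eball (0 : ℂ) ((1 : NNReal) : ENNReal) := by
        rw [mem_emetric_ball_zero_iff]
        exact_mod_cast hylt
      have hsum := hps.hasSum hmem
      rw [zero_add] at hsum
      have hsum2 : HasSum (fun n => F n ζ) (f ((r : ℂ) * ζ) * (starRingEnd ℂ) (h ζ)) := by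
        have := hsum.mul_right ((starRingEnd ℂ) (h ζ))
        refine HasSum.congr_fun this fun n => ?_
        simp only [hF_def, FormalMultilinearSeries.apply_eq_pow_smul_coeff, smul_eq_mul]
      exact hsum2.tsum_eq
    have hkey0 : ∫ ζ, (∑' n, F n ζ) ∂ν = 0 := by
      have : (fun n => ∫ ζ, F n ζ ∂ν) = fun _ => (0 : ℂ) := funext hintF
      rw [this] at key
      exact key.unique hasSum_zero
    rw [← htsum, hkey0]
  -- take the limit r → 1
  have hrseq : ∀ k : ℕ, (0 : ℝ) ≤ 1 - (((k : ℝ) + 1)⁻¹) ∧ (1 - (((k : ℝ) + 1)⁻¹)) < 1 := by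
    intro k
    constructor
    · have h1 : (((k : ℝ) + 1)⁻¹) ≤ 1 := by
        rw [inv_le_one_iff₀]
        right
        linarith [Nat.cast_nonneg (α := ℝ) k]
      linarith
    · have h1 : (0 : ℝ) < ((k : ℝ) + 1)⁻¹ := by positivity
      linarith
  set rs : ℕ → ℝ := fun k => 1 - (((k : ℝ) + 1)⁻¹) with hrs_def
  have hrtend : Tendsto rs atTop (nhds 1) := by
    have h1 : Tendsto (fun k : ℕ => ((k : ℝ) + 1)⁻¹) atTop (nhds 0) :=
      tendsto_inv_atTop_zero.comp
        (tendsto_atTop_add_const_right atTop 1 tendsto_natCast_atTop_atTop)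
    simpa using tendsto_const_nhds.sub h1
  have hDCT : Tendsto (fun k => ∫ ζ, f ((rs k : ℂ) * ζ) * (starRingEnd ℂ) (h ζ) ∂ν)
      atTop (nhds (∫ ζ, f ζ * (starRingEnd ℂ) (h ζ) ∂ν)) := by
    refine tendsto_integral_of_dominated_convergence (fun ζ => M * ‖h ζ‖) ?_ ?_ ?_ ?_
    · intro k
      have hcont : ContinuousOn (fun ζ => f ((rs k : ℂ) * ζ)) (closedBall (0 : ℂ) 1) := by
        apply hfc.comp (continuous_mul_left ((rs k : ℂ))).continuousOn
        intro ζ hζ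
        rw [mem_closedBall_zero_iff] at hζ ⊢
        rw [norm_mul, Complex.norm_real, Real.norm_eq_abs, _root_.abs_of_nonneg (hrseq k).1]
        calc rs k * ‖ζ‖ ≤ 1 * 1 := by
              apply mul_le_mul (hrseq k).2.le hζ (norm_nonneg _) zero_le_one
          _ = 1 := by norm_num
      have hrestrict : ν.restrict (closedBall (0 : ℂ) 1) = ν := by
        apply Measure.restrict_eq_self_of_ae_mem
        filter_upwards [hae] with ζ hζ
        rw [mem_closedBall_zero_iff, hζ]
      have := hcont.aestronglyMeasurable (μ := ν) measurableSet_closedBall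
      rw [hrestrict] at this
      exact this.mul hconj
    · exact hint.norm.const_mul M
    · intro k
      filter_upwards [hae] with ζ hζ
      rw [norm_mul, RCLike.norm_conj]
      apply mul_le_mul_of_nonneg_right _ (norm_nonneg _)
      apply hM
      rw [mem_closedBall_zero_iff, norm_mul, Complex.norm_real, Real.norm_eq_abs,
        _root_.abs_of_nonneg (hrseq k).1, hζ, mul_one]
      exact (hrseq k).2.le
    · filter_upwards [hae] with ζ hζ
      have hζmem : ζ ∈ closedBall (0 : ℂ) 1 := by
        rw [mem_closedBall_zero_iff, hζ]
      have hfwa : ContinuousWithinAt f (closedBall (0 : ℂ) 1) ζ := hfc ζ hζmem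
      have hseqtend : Tendsto (fun k => (rs k : ℂ) * ζ) atTop
          (nhdsWithin ζ (closedBall (0 : ℂ) 1)) := by
        apply tendsto_nhdsWithin_of_tendsto_nhds_of_eventually_within
        · have h1 : Tendsto (fun k => ((rs k : ℝ) : ℂ)) atTop (nhds (1 : ℂ)) := by
            exact (Complex.continuous_ofReal.tendsto 1).comp hrtend
          have := h1.mul_const ζ
          rwa [one_mul] at this
        · apply Eventually.of_forall
          intro k
          rw [mem_closedBall_zero_iff, norm_mul, Complex.norm_real, Real.norm_eq_abs,
            _root_.abs_of_nonneg (hrseq k).1, hζ, mul_one]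
          exact (hrseq k).2.le
      exact (hfwa.tendsto.comp hseqtend).mul_const _
  have hconst : (fun k => ∫ ζ, f ((rs k : ℂ) * ζ) * (starRingEnd ℂ) (h ζ) ∂ν)
      = fun _ => (0 : ℂ) := by
    funext k
    exact hzero_r (rs k) (hrseq k).1 (hrseq k).2
  rw [hconst] at hDCT
  exact (tendsto_nhds_unique tendsto_const_nhds hDCT).symm


/-- If a finite complex Borel measure `μ = h dν` on the unit circle has identically vanishing
Cauchy transform on the disc, then its conjugate `conj μ = conj (h) dν` is a Henkin measure:
`∫ f_j d(conj μ) → 0` for every bounded sequence in the disc algebra converging pointwise to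
`0` on the disc. -/
theorem stmt8 (ν : Measure ℂ) (hνfin : IsFiniteMeasure ν)
    (hνsupp : ν (sphere (0 : ℂ) 1)ᶜ = 0)
    (h : ℂ → ℂ) (hint : Integrable h ν)
    (hcauchy : ∀ z ∈ ball (0 : ℂ) 1,
      ∫ ζ, h ζ * (1 - z * (starRingEnd ℂ) ζ)⁻¹ ∂ν = 0) :
    ∀ f : ℕ → ℂ → ℂ,
      (∀ j, ContinuousOn (f j) (closedBall (0 : ℂ) 1) ∧
        DifferentiableOn ℂ (f j) (ball (0 : ℂ) 1)) →
      (∃ M : ℝ, ∀ j, ∀ z ∈ closedBall (0 : ℂ) 1, ‖f j z‖ ≤ M) →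
      (∀ z ∈ ball (0 : ℂ) 1, Tendsto (fun j => f j z) atTop (nhds 0)) →
      Tendsto (fun j => ∫ ζ, f j ζ * (starRingEnd ℂ) (h ζ) ∂ν) atTop (nhds 0) := by
  haveI := hνfin
  intro f hf hbdd _hptwise
  obtain ⟨M, hM⟩ := hbdd
  have hae : ∀ᵐ ζ ∂ν, ‖ζ‖ = 1 := by
    rw [MeasureTheory.ae_iff]
    convert hνsupp using 2
    ext ζ
    simp [mem_sphere_zero_iff_norm]
  have hmom : ∀ n : ℕ, ∫ ζ, ζ ^ n * (starRingEnd ℂ) (h ζ) ∂ν = 0 := by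
    intro n
    have hmv := moments_vanish ν hae h hint hcauchy n
    have heq : (fun ζ : ℂ => ζ ^ n * (starRingEnd ℂ) (h ζ))
        = fun ζ => (starRingEnd ℂ) (((starRingEnd ℂ) ζ) ^ n * h ζ) := by
      funext ζ
      simp [map_mul, map_pow, Complex.conj_conj]
    rw [heq, integral_conj, hmv, map_zero]
  have hzero : ∀ j, ∫ ζ, f j ζ * (starRingEnd ℂ) (h ζ) ∂ν = 0 := by
    intro j
    exact annihilates ν hae h hint hmom (f j) (hf j).1 (hf j).2 M (hM j)
  have : (fun j => ∫ ζ, f j ζ * (starRingEnd ℂ) (h ζ) ∂ν) = fun _ => (0 : ℂ) :=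
    funext hzero
  rw [this]
  exact tendsto_const_nhds
end
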